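/- (Multilevel V-cycle quadratic form bound.) Let E be a finite-dimensional real inner product space and let V_0 ⊆ V_1 ⊆ ⋯ ⊆ V_K be a chain of subspaces of E. For each 1 ≤ k ≤ K, let R_k : V_k → V_k be linear, self-adjoint with respect to the restricted inner product, and satisfy 0 ≤ ⟪R_k v, v⟫ ≤ ⟪v, v⟫ for all v ∈ V_k; let P_k : V_k → V_{k-1} be the orthogonal projection of V_k onto V_{k-1} and ι_k : V_{k-1} → V_k the inclusion. Fix an integer m ≥ 1 and a constant C > 0, and assume the approximation property ⟪v − ι_k P_k v, v − ι_k P_k v⟫ ≤ C · ⟪(Id − R_k) v, v⟫ for all v ∈ V_k and all 1 ≤ k ≤ K. Define E_0 := 0 on V_0 and, recursively, E_k := R_k^m ∘ (Id_{V_k} − ι_k ∘ P_k + ι_k ∘ E_{k-1} ∘ P_k) ∘ R_k^m on V_k. Then for every 0 ≤ k ≤ K and every v ∈ V_k, ⟪E_k v, v⟫ ≤ (C/(C + 2m)) · ⟪v, v⟫. -/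

import Mathlib

open RealInnerProductSpace

/-!
Induction on the level. With `w = Rᵐ v` and `e = w - ι (P w)`, orthogonality of `e` to the
coarse space gives `⟪Eₖ₊₁ v, v⟫ = ‖e‖² + ⟪Eₖ (P w), P w⟫` and `‖w‖² = ‖e‖² + ‖P w‖²`, so the
induction hypothesis and the approximation property bound `⟪Eₖ₊₁ v, v⟫` by
`δ ‖w‖² + (1 - δ) C ⟪(1 - R) w, w⟫` with `δ = C / (C + 2m)`, where `(1 - δ) C = 2 m δ`.
This is at most `δ ‖v‖²` by the smoothing property `n ⟪(1 - R) Rⁿ v, v⟫ + ⟪Rⁿ v, v⟫ ≤ ‖v‖²`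
for `n = 2m`, which holds because `j ↦ ⟪(1 - R) Rʲ v, v⟫` is antitone and telescopes to
`‖v‖² - ⟪Rⁿ v, v⟫`.
-/

namespace LinearMap

variable {𝕜 F : Type*} [RCLike 𝕜] [NormedAddCommGroup F] [InnerProductSpace 𝕜 F]

theorem IsPositive.pow {S : F →ₗ[𝕜] F} (hS : S.IsPositive) (n : ℕ) : (S ^ n).IsPositive := by
  refine ⟨hS.isSymmetric.pow n, fun x => ?_⟩
  obtain ⟨i, rfl | rfl⟩ := Nat.even_or_odd' n
  · rw [two_mul, pow_add, Module.End.mul_apply, hS.isSymmetric.pow i]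
    exact inner_self_nonneg
  · rw [pow_succ, two_mul, pow_add, mul_assoc, ← (Commute.self_pow S i).eq,
      Module.End.mul_apply, hS.isSymmetric.pow i, Module.End.mul_apply]
    exact hS.re_inner_nonneg_left _

theorem IsSymmetric.inner_apply_pow_apply_pow {S X : F →ₗ[𝕜] F} (hS : S.IsSymmetric)
    (hX : Commute X S) (m : ℕ) (v : F) :
    inner 𝕜 (X ((S ^ m) v)) ((S ^ m) v) = inner 𝕜 ((X * S ^ (2 * m)) v) v := by
  rw [← hS.pow m, two_mul, pow_add, ← mul_assoc, (hX.pow_right m).eq]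
  rfl

end LinearMap

def Submodule.inclusionₗᵢ {R E : Type*} [Ring R] [SeminormedAddCommGroup E] [Module R E]
    {p q : Submodule R E} (h : p ≤ q) : p →ₗᵢ[R] q :=
  ⟨Submodule.inclusion h, fun _ => rfl⟩

theorem inner_add_map_add_map_of_inner_map_eq_zero {𝕜 F G : Type*} [RCLike 𝕜]
    [NormedAddCommGroup F] [InnerProductSpace 𝕜 F] [NormedAddCommGroup G]
    [InnerProductSpace 𝕜 G] (ι : G →ₗᵢ[𝕜] F) {e : F} (he : ∀ u, inner 𝕜 e (ι u) = 0) (a b : G) :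
    inner 𝕜 (e + ι a) (e + ι b) = inner 𝕜 e e + inner 𝕜 a b := by
  rw [inner_add_left, inner_add_right, inner_add_right, he, inner_eq_zero_symm.mp (he a),
    ι.inner_map_map, add_zero, zero_add]

section Multigrid

variable {F G : Type*} [NormedAddCommGroup F] [InnerProductSpace ℝ F]
  [NormedAddCommGroup G] [InnerProductSpace ℝ G] {S : F →ₗ[ℝ] F}

theorem LinearMap.IsPositive.antitone_inner_one_sub_mul_pow_apply (hS : S.IsPositive) (v : F) :
    Antitone fun j : ℕ => ⟪((1 - S) * S ^ j) v, v⟫ := by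
  refine antitone_nat_of_succ_le fun j => sub_nonneg.mp ?_
  have hT : (1 - S).IsSymmetric := LinearMap.IsSymmetric.id.sub hS.isSymmetric
  have hsplit : (1 - S) * S ^ j - (1 - S) * S ^ (j + 1) = (1 - S) * (S ^ j * (1 - S)) := by
    rw [pow_succ]
    noncomm_ring
  calc 0 ≤ ⟪(S ^ j) ((1 - S) v), (1 - S) v⟫ := (hS.pow j).inner_nonneg_left _
    _ = ⟪((1 - S) * S ^ j - (1 - S) * S ^ (j + 1)) v, v⟫ := by
      rw [hsplit, Module.End.mul_apply, hT]
      rfl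
    _ = ⟪((1 - S) * S ^ j) v, v⟫ - ⟪((1 - S) * S ^ (j + 1)) v, v⟫ := by
      rw [LinearMap.sub_apply, inner_sub_left]

theorem LinearMap.IsPositive.natCast_mul_inner_one_sub_mul_pow_add_inner_pow_le
    (hS : S.IsPositive) (n : ℕ) (v : F) :
    n * ⟪((1 - S) * S ^ n) v, v⟫ + ⟪(S ^ n) v, v⟫ ≤ ⟪v, v⟫ := by
  have htelescope : ∑ j ∈ Finset.range n, ⟪((1 - S) * S ^ j) v, v⟫ = ⟪v, v⟫ - ⟪(S ^ n) v, v⟫ := by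
    calc _ = ∑ j ∈ Finset.range n, (⟪(S ^ j) v, v⟫ - ⟪(S ^ (j + 1)) v, v⟫) := by
          refine Finset.sum_congr rfl fun j _ => ?_
          rw [sub_mul, one_mul, ← pow_succ', LinearMap.sub_apply, inner_sub_left]
      _ = ⟪(S ^ 0) v, v⟫ - ⟪(S ^ n) v, v⟫ := Finset.sum_range_sub' _ n
      _ = _ := by rw [pow_zero, Module.End.one_apply]
  have hbound := Finset.card_nsmul_le_sum (Finset.range n) _ _ fun j hj =>
    hS.antitone_inner_one_sub_mul_pow_apply v (Finset.mem_range.mp hj).le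
  rw [Finset.card_range, nsmul_eq_mul, htelescope] at hbound
  linarith

theorem inner_vcycle_step_le (hS : S.IsPositive) (ι : G →ₗᵢ[ℝ] F) (P : F →ₗ[ℝ] G)
    (hP : ∀ w u, ⟪w - ι (P w), ι u⟫ = 0) {C : ℝ} (hC : 0 < C) {m : ℕ}
    (happrox : ∀ w, ⟪w - ι (P w), w - ι (P w)⟫ ≤ C * ⟪(1 - S) w, w⟫)
    {E : G →ₗ[ℝ] G} (hE : ∀ u, ⟪E u, u⟫ ≤ C / (C + 2 * m) * ⟪u, u⟫) (v : F) :
    ⟪(S ^ m * (1 - ι.toLinearMap ∘ₗ P + ι.toLinearMap ∘ₗ (E ∘ₗ P)) * S ^ m) v, v⟫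
      ≤ C / (C + 2 * m) * ⟪v, v⟫ := by
  have hsmooth := hS.natCast_mul_inner_one_sub_mul_pow_add_inner_pow_le (2 * m) v
  rw [← hS.isSymmetric.inner_apply_pow_apply_pow ((Commute.one_left S).sub_left (.refl S)),
    ← one_mul (S ^ (2 * m)), ← hS.isSymmetric.inner_apply_pow_apply_pow (.one_left S),
    Module.End.one_apply] at hsmooth
  set w := (S ^ m) v
  set e := w - ι (P w)
  have he : ∀ u, ⟪e, ι u⟫ = 0 := hP w
  have hvalue : ⟪(S ^ m * (1 - ι.toLinearMap ∘ₗ P + ι.toLinearMap ∘ₗ (E ∘ₗ P)) * S ^ m) v, v⟫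
      = ⟪e, e⟫ + ⟪E (P w), P w⟫ := by
    calc _ = ⟪e + ι (E (P w)), e + ι (P w)⟫ := by
          rw [Module.End.mul_apply, Module.End.mul_apply, hS.isSymmetric.pow, sub_add_cancel]
          rfl
      _ = _ := inner_add_map_add_map_of_inner_map_eq_zero ι he _ _
  have hpythagoras : ⟪w, w⟫ = ⟪e, e⟫ + ⟪P w, P w⟫ := by
    simpa only [e, sub_add_cancel] using inner_add_map_add_map_of_inner_map_eq_zero ι he (P w) (P w)
  have hCm : 0 < C + 2 * m := by positivity
  have hcoarse := hE (P w)
  rw [div_mul_eq_mul_div, le_div_iff₀ hCm] at hcoarse ⊢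
  push_cast at hsmooth
  rw [hvalue]
  have h2m : (0 : ℝ) ≤ 2 * m := by positivity
  linear_combination hcoarse + mul_le_mul_of_nonneg_left (happrox w) h2m
    + mul_le_mul_of_nonneg_left hsmooth hC.le - C * hpythagoras

end Multigrid

theorem vcycle_quadratic_form_bound_general
    {E : Type*} [NormedAddCommGroup E] [InnerProductSpace ℝ E]
    (K : ℕ) (V : ℕ → Submodule ℝ E) (hmono : ∀ k, V k ≤ V (k + 1))
    (R : ∀ k, V k →ₗ[ℝ] V k)
    (hsym : ∀ k, 1 ≤ k → k ≤ K → ∀ u v : V k, ⟪R k u, v⟫ = ⟪u, R k v⟫)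
    (hR0 : ∀ k, 1 ≤ k → k ≤ K → ∀ v : V k, 0 ≤ ⟪R k v, v⟫)
    (P : ∀ k, V (k + 1) →ₗ[ℝ] V k)
    (hP : ∀ k, k + 1 ≤ K → ∀ v : V (k + 1), ∀ w : V k,
      ⟪v - Submodule.inclusion (hmono k) (P k v), Submodule.inclusion (hmono k) w⟫ = 0)
    (m : ℕ) (C : ℝ) (hC : 0 < C)
    (happrox : ∀ k, k + 1 ≤ K → ∀ v : V (k + 1),
      ⟪v - Submodule.inclusion (hmono k) (P k v), v - Submodule.inclusion (hmono k) (P k v)⟫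
        ≤ C * ⟪((LinearMap.id : V (k + 1) →ₗ[ℝ] V (k + 1)) - R (k + 1)) v, v⟫)
    (Err : ∀ k, V k →ₗ[ℝ] V k)
    (hErr0 : Err 0 = 0)
    (hErrRec : ∀ k, k + 1 ≤ K →
      Err (k + 1) = R (k + 1) ^ m *
        ((LinearMap.id : V (k + 1) →ₗ[ℝ] V (k + 1))
          - (Submodule.inclusion (hmono k)).comp (P k)
          + (Submodule.inclusion (hmono k)).comp ((Err k).comp (P k))) *
        R (k + 1) ^ m) :
    ∀ k ≤ K, ∀ v : V k, ⟪Err k v, v⟫ ≤ (C / (C + 2 * (m : ℝ))) * ⟪v, v⟫ := by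
  intro k
  induction k with
  | zero =>
    intro _ v
    rw [hErr0, LinearMap.zero_apply, inner_zero_left]
    exact mul_nonneg (by positivity) real_inner_self_nonneg
  | succ k ih =>
    intro hk v
    have hR : (R (k + 1)).IsPositive :=
      ⟨hsym (k + 1) k.succ_pos hk, hR0 (k + 1) k.succ_pos hk⟩
    rw [hErrRec k hk]
    exact inner_vcycle_step_le hR (Submodule.inclusionₗᵢ (hmono k)) (P k) (hP k hk) hC
      (happrox k hk) (ih (by omega)) v

/-- Multilevel V-cycle quadratic form bound.  For a chain of subspaces
`V 0 ≤ V 1 ≤ ⋯ ≤ V K` with self-adjoint smoothing error operators `R k` satisfying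
`0 ≤ R k ≤ I`, orthogonal projections `P k : V (k+1) → V k` satisfying the approximation
property, and the V-cycle recursion with `m ≥ 1` smoothing steps, the error operators satisfy
`⟪Err k v, v⟫ ≤ (C/(C + 2m)) ⟪v, v⟫`. -/
theorem vcycle_quadratic_form_bound
    {E : Type*} [NormedAddCommGroup E] [InnerProductSpace ℝ E] [FiniteDimensional ℝ E]
    (K : ℕ) (V : ℕ → Submodule ℝ E) (hmono : ∀ k, V k ≤ V (k + 1))
    (R : ∀ k, V k →ₗ[ℝ] V k)
    (hsym : ∀ k, 1 ≤ k → k ≤ K → ∀ u v : V k, ⟪R k u, v⟫ = ⟪u, R k v⟫)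
    (hR0 : ∀ k, 1 ≤ k → k ≤ K → ∀ v : V k, 0 ≤ ⟪R k v, v⟫)
    (hR1 : ∀ k, 1 ≤ k → k ≤ K → ∀ v : V k, ⟪R k v, v⟫ ≤ ⟪v, v⟫)
    (P : ∀ k, V (k + 1) →ₗ[ℝ] V k)
    (hP : ∀ k, k + 1 ≤ K → ∀ v : V (k + 1), ∀ w : V k,
      ⟪v - Submodule.inclusion (hmono k) (P k v), Submodule.inclusion (hmono k) w⟫ = 0)
    (m : ℕ) (hm : 1 ≤ m) (C : ℝ) (hC : 0 < C)
    (happrox : ∀ k, k + 1 ≤ K → ∀ v : V (k + 1),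
      ⟪v - Submodule.inclusion (hmono k) (P k v), v - Submodule.inclusion (hmono k) (P k v)⟫
        ≤ C * ⟪((LinearMap.id : V (k + 1) →ₗ[ℝ] V (k + 1)) - R (k + 1)) v, v⟫)
    (Err : ∀ k, V k →ₗ[ℝ] V k)
    (hErr0 : Err 0 = 0)
    (hErrRec : ∀ k, k + 1 ≤ K →
      Err (k + 1) = R (k + 1) ^ m *
        ((LinearMap.id : V (k + 1) →ₗ[ℝ] V (k + 1))
          - (Submodule.inclusion (hmono k)).comp (P k)
          + (Submodule.inclusion (hmono k)).comp ((Err k).comp (P k))) *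
        R (k + 1) ^ m) :
    ∀ k ≤ K, ∀ v : V k, ⟪Err k v, v⟫ ≤ (C / (C + 2 * (m : ℝ))) * ⟪v, v⟫ :=
  vcycle_quadratic_form_bound_general K V hmono R hsym hR0 P hP m C hC happrox Err hErr0 hErrRec
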